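/- arXiv:2110.10913 — 13 statements merged into one kernel-verified Lean document; each statement's English description precedes it below -/
import Mathlib

section
/- Let v_{i-1}, v_i, v_{i+1} be real numbers with a = v_i - v_{i-1} ≥ 0 and b = v_{i+1} - v_i > 0 (monotonically increasing data). For β ∈ ℝ define the interface value P(β) = β·(3v_i - v_{i-1})/2 + (1-β)·(v_i + v_{i+1})/2. If -b ≤ β·(b - a) ≤ 2a + b, then v_{i-1} ≤ P(β) ≤ v_{i+1}. -/
theorem stmt_0_general (vm v vp β : ℝ)
    (h1 : -(vp - v) ≤ β * ((vp - v) - (v - vm)))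
    (h2 : β * ((vp - v) - (v - vm)) ≤ 2 * (v - vm) + (vp - v)) :
    vm ≤ β * (3 * v - vm) / 2 + (1 - β) * (v + vp) / 2 ∧
      β * (3 * v - vm) / 2 + (1 - β) * (v + vp) / 2 ≤ vp := by
  have lower_gap : β * (3 * v - vm) / 2 + (1 - β) * (v + vp) / 2 - vm
      = (2 * (v - vm) + (vp - v) - β * ((vp - v) - (v - vm))) / 2 := by ring
  have upper_gap : vp - (β * (3 * v - vm) / 2 + (1 - β) * (v + vp) / 2)
      = ((vp - v) + β * ((vp - v) - (v - vm))) / 2 := by ring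
  constructor <;> linarith

theorem stmt_0 (vm v vp β : ℝ)
    (ha : 0 ≤ v - vm) (hb : 0 < vp - v)
    (h1 : -(vp - v) ≤ β * ((vp - v) - (v - vm)))
    (h2 : β * ((vp - v) - (v - vm)) ≤ 2 * (v - vm) + (vp - v)) :
    vm ≤ β * (3 * v - vm) / 2 + (1 - β) * (v + vp) / 2 ∧
      β * (3 * v - vm) / 2 + (1 - β) * (v + vp) / 2 ≤ vp :=
  stmt_0_general vm v vp β h1 h2
end

section
/- Let v_{i-1}, v_i, v_{i+1} be real numbers with b = v_{i+1} - v_i ≠ 0, set a = v_i - v_{i-1} and r = a/b, and assume r ≠ 1. Define sgn(r) = 1 if r > 0 and sgn(r) = -1 if r ≤ 0, and K = min(1, sgn(r)/(r-1)). Then for every β with 0 ≤ β ≤ K, the value P(β) = β·(3v_i - v_{i-1})/2 + (1-β)·(v_i + v_{i+1})/2 satisfies min(v_{i-1}, v_i, v_{i+1}) ≤ P(β) ≤ max(v_{i-1}, v_i, v_{i+1}). -/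
theorem stmt_3 (vm v vp β : ℝ) (hb : vp - v ≠ 0)
    (r : ℝ) (hr : r = (v - vm) / (vp - v)) (hr1 : r ≠ 1)
    (K : ℝ) (hK : K = min 1 ((if r > 0 then (1:ℝ) else -1) / (r - 1)))
    (h0 : 0 ≤ β) (h1 : β ≤ K) :
    min (min vm v) vp ≤ β * (3 * v - vm) / 2 + (1 - β) * (v + vp) / 2 ∧
      β * (3 * v - vm) / 2 + (1 - β) * (v + vp) / 2 ≤ max (max vm v) vp := by
  have hne : r - 1 ≠ 0 := sub_ne_zero.2 hr1
  have hKle1 : β ≤ 1 := h1.trans (hK ▸ min_le_left _ _)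
  have hKle2 : β ≤ (if r > 0 then (1:ℝ) else -1) / (r - 1) :=
    h1.trans (hK ▸ min_le_right _ _)
  set t := 1 + β * (r - 1) with ht
  have ht2 : t ≤ 2 := by
    rcases lt_or_gt_of_ne hr1 with h | h
    · nlinarith
    · rw [if_pos (by linarith : r > 0)] at hKle2
      have := (le_div_iff₀ (by linarith : (0:ℝ) < r - 1)).mp hKle2
      linarith
  have ht0 : 0 ≤ t := by
    rcases lt_or_gt_of_ne hr1 with h | h
    · by_cases hrpos : r > 0
      · rw [if_pos hrpos] at hKle2
        have : (1:ℝ) / (r - 1) < 0 := div_neg_of_pos_of_neg one_pos (by linarith)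
        linarith
      · rw [if_neg hrpos] at hKle2
        have hmul := mul_le_mul_of_nonneg_right hKle2 (by linarith : (0:ℝ) ≤ 1 - r)
        have heq : (-1 / (r - 1)) * (1 - r) = 1 := by field_simp; ring
        nlinarith
    · nlinarith [mul_nonneg h0 (by linarith : (0:ℝ) ≤ r - 1)]
  have hP : β * (3 * v - vm) / 2 + (1 - β) * (v + vp) / 2 = v + (vp - v) * t / 2 := by
    rw [ht, hr]; field_simp; ring
  rw [hP]
  have hminv : min (min vm v) vp ≤ v := (min_le_left _ _).trans (min_le_right _ _)
  have hminvp : min (min vm v) vp ≤ vp := min_le_right _ _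
  have hmaxv : v ≤ max (max vm v) vp := (le_max_right _ _).trans (le_max_left _ _)
  have hmaxvp : vp ≤ max (max vm v) vp := le_max_right _ _
  rcases hb.lt_or_gt with h | h
  · constructor
    · nlinarith
    · nlinarith
  · constructor
    · nlinarith
    · nlinarith
end

section
/- Let v_{i-1}, v_i, v_{i+1} be real numbers with a = v_i - v_{i-1} > 0 and b = v_{i+1} - v_i ≥ 0 (monotonically increasing data). For μ ∈ ℝ define the left-interface value Q(μ) = μ·(v_i + v_{i-1})/2 + (1-μ)·(3v_i - v_{i+1})/2. If -3b ≤ μ·(a - b) ≤ 2a - b, then v_{i-1} ≤ Q(μ) ≤ v_{i+1}. -/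
lemma interface_value_eq_sub (vm v vp μ : ℝ) :
    μ * (v + vm) / 2 + (1 - μ) * (3 * v - vp) / 2
      = v - ((vp - v) + μ * ((v - vm) - (vp - v))) / 2 := by
  ring

theorem stmt_4_general (vm v vp μ : ℝ)
    (h1 : -(3 * (vp - v)) ≤ μ * ((v - vm) - (vp - v)))
    (h2 : μ * ((v - vm) - (vp - v)) ≤ 2 * (v - vm) - (vp - v)) :
    vm ≤ μ * (v + vm) / 2 + (1 - μ) * (3 * v - vp) / 2 ∧
      μ * (v + vm) / 2 + (1 - μ) * (3 * v - vp) / 2 ≤ vp := by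
  rw [interface_value_eq_sub]
  constructor <;> linarith

theorem stmt_4 (vm v vp μ : ℝ)
    (ha : 0 < v - vm) (hb : 0 ≤ vp - v)
    (h1 : -(3 * (vp - v)) ≤ μ * ((v - vm) - (vp - v)))
    (h2 : μ * ((v - vm) - (vp - v)) ≤ 2 * (v - vm) - (vp - v)) :
    vm ≤ μ * (v + vm) / 2 + (1 - μ) * (3 * v - vp) / 2 ∧
      μ * (v + vm) / 2 + (1 - μ) * (3 * v - vp) / 2 ≤ vp :=
  stmt_4_general vm v vp μ h1 h2
end

section
/- Let v_{i-1}, v_i, v_{i+1} be real numbers with a = v_i - v_{i-1} ≠ 0, set b = v_{i+1} - v_i and r = b/a, and assume r ≠ 1. Define J = max(0, min((2-r)/(1-r), -r/(1-r))). Then for every μ with J ≤ μ ≤ 1, the value Q(μ) = μ·(v_i + v_{i-1})/2 + (1-μ)·(3v_i - v_{i+1})/2 satisfies min(v_{i-1}, v_i, v_{i+1}) ≤ Q(μ) ≤ max(v_{i-1}, v_i, v_{i+1}). -/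
theorem stmt_5 (vm v vp μ : ℝ) (ha : v - vm ≠ 0)
    (r : ℝ) (hr : r = (vp - v) / (v - vm)) (hr1 : r ≠ 1)
    (J : ℝ) (hJ : J = max 0 (min ((2 - r) / (1 - r)) (-r / (1 - r))))
    (h0 : J ≤ μ) (h1 : μ ≤ 1) :
    min (min vm v) vp ≤ μ * (v + vm) / 2 + (1 - μ) * (3 * v - vp) / 2 ∧
      μ * (v + vm) / 2 + (1 - μ) * (3 * v - vp) / 2 ≤ max (max vm v) vp := by
  have hvp : vp = v + r * (v - vm) := by
    rw [hr]; field_simp; ring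
  have hμ0 : 0 ≤ μ := le_trans (by rw [hJ]; exact le_max_left _ _) h0
  have hμm : min ((2 - r) / (1 - r)) (-r / (1 - r)) ≤ μ :=
    le_trans (by rw [hJ]; exact le_max_right _ _) h0
  -- show 0 ≤ s where s = μ + (1-μ)*r
  have hs0 : 0 ≤ μ + (1 - μ) * r := by
    rcases le_or_gt 0 r with hrpos | hrneg
    · nlinarith [mul_nonneg (by linarith : (0:ℝ) ≤ 1 - μ) hrpos]
    · have h1r : (0:ℝ) < 1 - r := by linarith
      have hAB : -r / (1 - r) ≤ (2 - r) / (1 - r) :=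
        (div_le_div_iff_of_pos_right h1r).mpr (by linarith)
      have hB : -r / (1 - r) ≤ μ := by rw [min_eq_right hAB] at hμm; exact hμm
      have : -r ≤ μ * (1 - r) := by
        rw [div_le_iff₀ h1r] at hB; linarith
      nlinarith
  -- show s ≤ 2
  have hs2 : μ + (1 - μ) * r ≤ 2 := by
    rcases lt_or_gt_of_ne hr1 with hlt | hgt
    · nlinarith [mul_nonneg (by linarith : (0:ℝ) ≤ 1 - μ) (by linarith : (0:ℝ) ≤ 1 - r)]
    · have h1r : 1 - r < 0 := by linarith
      have hAB : (2 - r) / (1 - r) ≤ -r / (1 - r) :=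
        (div_le_div_right_of_neg h1r).mpr (by linarith)
      have hA : (2 - r) / (1 - r) ≤ μ := by rw [min_eq_left hAB] at hμm; exact hμm
      have : μ * (1 - r) ≤ 2 - r := by
        rw [div_le_iff_of_neg h1r] at hA; linarith
      nlinarith
  rcases lt_or_gt_of_ne ha with haneg | hapos
  · -- v < vm : show v ≤ Q ≤ vm
    have hQv : v ≤ μ * (v + vm) / 2 + (1 - μ) * (3 * v - vp) / 2 := by
      nlinarith [mul_nonneg hs0 (by linarith : (0:ℝ) ≤ vm - v)]
    have hQvm : μ * (v + vm) / 2 + (1 - μ) * (3 * v - vp) / 2 ≤ vm := by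
      nlinarith [mul_nonneg (by linarith : (0:ℝ) ≤ 2 - (μ + (1 - μ) * r))
        (by linarith : (0:ℝ) ≤ vm - v)]
    exact ⟨le_trans ((min_le_left _ _).trans (min_le_right _ _)) hQv,
      le_trans hQvm (le_max_of_le_left (le_max_left _ _))⟩
  · -- vm < v : show vm ≤ Q ≤ v
    have hQvm : vm ≤ μ * (v + vm) / 2 + (1 - μ) * (3 * v - vp) / 2 := by
      nlinarith [mul_nonneg (by linarith : (0:ℝ) ≤ 2 - (μ + (1 - μ) * r))
        (by linarith : (0:ℝ) ≤ v - vm)]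
    have hQv : μ * (v + vm) / 2 + (1 - μ) * (3 * v - vp) / 2 ≤ v := by
      nlinarith [mul_nonneg hs0 (by linarith : (0:ℝ) ≤ v - vm)]
    exact ⟨le_trans ((min_le_left _ _).trans (min_le_left _ _)) hQvm,
      le_trans hQv (le_max_of_le_left (le_max_right _ _))⟩
end

section
/- Let v_{i-1}, v_i, v_{i+1} be real numbers with b = v_{i+1} - v_i ≠ 0, set r = (v_i - v_{i-1})/b, and assume r ≠ 1. Define sgn(r) = 1 if r > 0 and -1 if r ≤ 0, K = min(1, sgn(r)/(r-1)), and the nonlinear weight β₀ = min(1/4, |K|). Then P(β₀) = β₀·(3v_i - v_{i-1})/2 + (1-β₀)·(v_i + v_{i+1})/2 satisfies min(v_{i-1}, v_i, v_{i+1}) ≤ P(β₀) ≤ max(v_{i-1}, v_i, v_{i+1}). -/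
theorem stmt_6 (vm v vp : ℝ) (hb : vp - v ≠ 0)
    (r : ℝ) (hr : r = (v - vm) / (vp - v)) (hr1 : r ≠ 1)
    (K : ℝ) (hK : K = min 1 ((if r > 0 then (1:ℝ) else -1) / (r - 1)))
    (β₀ : ℝ) (hβ : β₀ = min (1/4) |K|) :
    min (min vm v) vp ≤ β₀ * (3 * v - vm) / 2 + (1 - β₀) * (v + vp) / 2 ∧
      β₀ * (3 * v - vm) / 2 + (1 - β₀) * (v + vp) / 2 ≤ max (max vm v) vp := by
  have hr1' : r - 1 ≠ 0 := sub_ne_zero.mpr hr1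
  have hvm : v - vm = r * (vp - v) := by
    rw [hr]; field_simp
  have hβ0 : 0 ≤ β₀ := by
    rw [hβ]; exact le_min (by norm_num) (abs_nonneg K)
  -- key: β₀ * |r - 1| ≤ 1
  have hkey : β₀ * |r - 1| ≤ 1 := by
    have hβK : β₀ ≤ |K| := hβ ▸ min_le_right _ _
    have hKle : |K| * |r - 1| ≤ 1 := by
      rcases lt_or_ge 1 r with h | h
      · have hr0 : r > 0 := by linarith
        have h1 : (0:ℝ) < r - 1 := by linarith
        rw [hK, if_pos hr0, abs_of_pos h1]
        have hKpos : 0 ≤ min 1 (1 / (r - 1)) :=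
          le_min (by norm_num) (by positivity)
        rw [abs_of_nonneg hKpos]
        have : min 1 (1 / (r - 1)) ≤ 1 / (r - 1) := min_le_right _ _
        calc min 1 (1 / (r - 1)) * (r - 1) ≤ (1 / (r - 1)) * (r - 1) := by
              exact mul_le_mul_of_nonneg_right this (le_of_lt h1)
          _ = 1 := by field_simp
      · have h1 : r - 1 < 0 := lt_of_le_of_ne (by linarith) hr1'
        have habs : |r - 1| = 1 - r := by rw [abs_of_neg h1]; ring
        by_cases hr0 : r > 0
        · have hneg : (1:ℝ) / (r - 1) < 0 := div_neg_of_pos_of_neg one_pos h1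
          rw [hK, if_pos hr0, min_eq_right (by linarith), abs_of_neg hneg, habs]
          have : -(1 / (r - 1)) * (1 - r) = 1 := by field_simp; ring
          linarith
        · have hval : (-1:ℝ) / (r - 1) = 1 / (1 - r) := by
            rw [div_eq_div_iff hr1' (by linarith : (1:ℝ) - r ≠ 0)]; ring
          have h1r : (1:ℝ) ≤ 1 - r := by push_neg at hr0; linarith
          have hpos : (0:ℝ) < 1 / (1 - r) := by positivity
          have hle1 : 1 / (1 - r) ≤ 1 := by
            rw [div_le_one (by linarith)]; exact h1r
          rw [hK, if_neg hr0, hval, min_eq_right hle1, abs_of_pos hpos, habs]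
          rw [div_mul_cancel₀]; linarith
    calc β₀ * |r - 1| ≤ |K| * |r - 1| :=
          mul_le_mul_of_nonneg_right hβK (abs_nonneg _)
      _ ≤ 1 := hKle
  have habs' : β₀ * (r - 1) ≤ 1 ∧ -1 ≤ β₀ * (r - 1) := by
    constructor
    · calc β₀ * (r - 1) ≤ β₀ * |r - 1| :=
            mul_le_mul_of_nonneg_left (le_abs_self _) hβ0
        _ ≤ 1 := hkey
    · have : -(β₀ * (r - 1)) ≤ β₀ * |r - 1| := by
        rw [← mul_neg]
        exact mul_le_mul_of_nonneg_left (neg_le_abs _) hβ0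
      linarith
  obtain ⟨hu, hl⟩ := habs'
  have hminv : min (min vm v) vp ≤ v := le_trans (min_le_left _ _) (min_le_right _ _)
  have hmaxv : v ≤ max (max vm v) vp := le_trans (le_max_right _ _) (le_max_left _ _)
  have hminp : min (min vm v) vp ≤ vp := min_le_right _ _
  have hmaxp : vp ≤ max (max vm v) vp := le_max_right _ _
  rcases le_or_gt 0 (vp - v) with hb0 | hb0
  · constructor
    · have : v ≤ β₀ * (3 * v - vm) / 2 + (1 - β₀) * (v + vp) / 2 := by
        nlinarith [mul_nonneg hb0 (by linarith : (0:ℝ) ≤ 1 + β₀ * (r - 1))]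
      linarith
    · have : β₀ * (3 * v - vm) / 2 + (1 - β₀) * (v + vp) / 2 ≤ vp := by
        nlinarith [mul_nonneg hb0 (by linarith : (0:ℝ) ≤ 1 - β₀ * (r - 1))]
      linarith
  · constructor
    · have : vp ≤ β₀ * (3 * v - vm) / 2 + (1 - β₀) * (v + vp) / 2 := by
        nlinarith [mul_nonneg (by linarith : (0:ℝ) ≤ v - vp)
          (by linarith : (0:ℝ) ≤ 1 - β₀ * (r - 1))]
      linarith
    · have : β₀ * (3 * v - vm) / 2 + (1 - β₀) * (v + vp) / 2 ≤ v := by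
        nlinarith [mul_nonneg (by linarith : (0:ℝ) ≤ v - vp)
          (by linarith : (0:ℝ) ≤ 1 + β₀ * (r - 1))]
      linarith
end

section
/- Let v_{i-1}, v_i, v_{i+1} be real numbers with a = v_i - v_{i-1} ≠ 0, set r = (v_{i+1} - v_i)/a, and assume r ≠ 1. Define the nonlinear weight μ₀ = max(3/4, min((2-r)/(1-r), -r/(1-r))). Then Q(μ₀) = μ₀·(v_i + v_{i-1})/2 + (1-μ₀)·(3v_i - v_{i+1})/2 satisfies min(v_{i-1}, v_i, v_{i+1}) ≤ Q(μ₀) ≤ max(v_{i-1}, v_i, v_{i+1}). -/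
/-!
Write `a = v - vm`, so that `vp = v + r a`. The interpolant is then `v + (c / 2) (vm - v)` with
`c = r + μ₀ (1 - r) = 1 - (1 - r)(1 - μ₀)`, a point of the segment between `v` and `vm` as soon as
`c ∈ [0, 2]`. Since `(2 - r)/(1 - r) = 1 + s⁻¹` and `-r/(1 - r) = 1 - s⁻¹` for `s = 1 - r`, the weight
satisfies `1 - μ₀ = min (1/4) |s|⁻¹`, whence `|s (1 - μ₀)| ≤ 1`.
-/

open Set

noncomputable def dataBoundedWeight (r : ℝ) : ℝ :=
  max (3/4) (min ((2 - r) / (1 - r)) (-r / (1 - r)))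

lemma one_sub_dataBoundedWeight {r : ℝ} (hr : r ≠ 1) :
    1 - dataBoundedWeight r = min (1/4) |1 - r|⁻¹ := by
  have hs : 1 - r ≠ 0 := sub_ne_zero.mpr hr.symm
  have hleft : (2 - r) / (1 - r) = 1 - -(1 - r)⁻¹ := by field_simp; ring
  have hright : -r / (1 - r) = 1 - (1 - r)⁻¹ := by field_simp; ring
  rw [dataBoundedWeight, hleft, hright, min_sub_sub_left, max_comm (-_), ← abs_eq_max_neg,
    ← min_sub_sub_left, abs_inv]
  norm_num

lemma abs_one_sub_mul_one_sub_dataBoundedWeight_le (r : ℝ) :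
    |(1 - r) * (1 - dataBoundedWeight r)| ≤ 1 := by
  rcases eq_or_ne r 1 with rfl | hr
  · simp
  rw [one_sub_dataBoundedWeight hr, abs_mul, abs_of_nonneg (a := min _ _) (by positivity)]
  calc |1 - r| * min (1/4) |1 - r|⁻¹ ≤ |1 - r| * |1 - r|⁻¹ := by gcongr; exact min_le_right _ _
    _ ≤ 1 := mul_inv_le_one

lemma half_one_sub_mul_one_sub_dataBoundedWeight_mem_Icc (r : ℝ) :
    (1 - (1 - r) * (1 - dataBoundedWeight r)) / 2 ∈ Icc (0 : ℝ) 1 := by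
  obtain ⟨hlow, hup⟩ := abs_le.mp (abs_one_sub_mul_one_sub_dataBoundedWeight_le r)
  constructor <;> linarith

lemma weighted_interpolant_eq_lineMap {vm v vp r : ℝ} (hvp : vp = v + r * (v - vm)) (μ : ℝ) :
    μ * (v + vm) / 2 + (1 - μ) * (3 * v - vp) / 2 =
      AffineMap.lineMap v vm ((1 - (1 - r) * (1 - μ)) / 2) := by
  rw [AffineMap.lineMap_apply_ring', hvp]
  ring

theorem stmt_7_general (vm v vp : ℝ) (ha : v - vm ≠ 0)
    (r : ℝ) (hr : r = (vp - v) / (v - vm))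
    (μ₀ : ℝ) (hμ : μ₀ = max (3/4) (min ((2 - r) / (1 - r)) (-r / (1 - r)))) :
    min (min vm v) vp ≤ μ₀ * (v + vm) / 2 + (1 - μ₀) * (3 * v - vp) / 2 ∧
      μ₀ * (v + vm) / 2 + (1 - μ₀) * (3 * v - vp) / 2 ≤ max (max vm v) vp := by
  have hvp : vp = v + r * (v - vm) := by rw [hr, div_mul_cancel₀ _ ha]; ring
  have hQ : μ₀ * (v + vm) / 2 + (1 - μ₀) * (3 * v - vp) / 2 ∈ uIcc vm v := by
    rw [uIcc_comm, weighted_interpolant_eq_lineMap hvp, hμ, ← segment_eq_uIcc]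
    exact lineMap_mem_segment ℝ v vm (half_one_sub_mul_one_sub_dataBoundedWeight_mem_Icc r)
  exact ⟨(min_le_left _ _).trans hQ.1, hQ.2.trans (le_max_left _ _)⟩

theorem stmt_7 (vm v vp : ℝ) (ha : v - vm ≠ 0)
    (r : ℝ) (hr : r = (vp - v) / (v - vm)) (hr1 : r ≠ 1)
    (μ₀ : ℝ) (hμ : μ₀ = max (3/4) (min ((2 - r) / (1 - r)) (-r / (1 - r)))) :
    min (min vm v) vp ≤ μ₀ * (v + vm) / 2 + (1 - μ₀) * (3 * v - vp) / 2 ∧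
      μ₀ * (v + vm) / 2 + (1 - μ₀) * (3 * v - vp) / 2 ≤ max (max vm v) vp :=
  stmt_7_general vm v vp ha r hr μ₀ hμ
end

section
/- For every real r, the identity 1/3 + (2/3)·(1 - 3|r|/(2|r|+1)) = 1/(2|r|+1) holds; moreover, for any real numbers v_{i-1}, v_i, v_{i+1} with b = v_{i+1} - v_i ≠ 0 and r = (v_i - v_{i-1})/b, the weight ω = 1/(2|r|+1) yields a data-bounded value: P(ω) = ω·(3v_i - v_{i-1})/2 + (1-ω)·(v_i + v_{i+1})/2 satisfies min(v_{i-1}, v_i, v_{i+1}) ≤ P(ω) ≤ max(v_{i-1}, v_i, v_{i+1}). -/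
theorem stmt_8 :
    (∀ r : ℝ, 1/3 + (2/3) * (1 - 3 * |r| / (2 * |r| + 1)) = 1 / (2 * |r| + 1)) ∧
    (∀ vm v vp : ℝ, vp - v ≠ 0 →
      ∀ r : ℝ, r = (v - vm) / (vp - v) →
        ∀ ω : ℝ, ω = 1 / (2 * |r| + 1) →
          min (min vm v) vp ≤ ω * (3 * v - vm) / 2 + (1 - ω) * (v + vp) / 2 ∧
            ω * (3 * v - vm) / 2 + (1 - ω) * (v + vp) / 2 ≤ max (max vm v) vp) := by
  constructor
  · intro r
    have hd : (2 * |r| + 1) ≠ 0 := by positivity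
    field_simp
    ring
  · intro vm v vp hb r hr ω hω
    have hd : (0:ℝ) < 2 * |r| + 1 := by positivity
    have hvm : vm = v - r * (vp - v) := by
      field_simp at hr; linarith [hr]
    set t : ℝ := (r + 2 * |r|) / (2 * (2 * |r| + 1)) with ht
    have habs := abs_nonneg r
    have hr1 : r ≤ |r| := le_abs_self r
    have hr2 : -r ≤ |r| := neg_le_abs r
    have ht0 : 0 ≤ t := by
      apply div_nonneg
      · linarith
      · linarith
    have ht1 : t ≤ 1 := by
      rw [div_le_one (by linarith)]
      linarith
    have hP : ω * (3 * v - vm) / 2 + (1 - ω) * (v + vp) / 2 = v + t * (vp - v) := by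
      rw [hvm, hω, ht]
      field_simp
      ring
    rw [hP]
    rcases le_or_gt v vp with h | h
    · constructor
      · have : v ≤ v + t * (vp - v) := by nlinarith
        calc min (min vm v) vp ≤ min v vp := min_le_min (min_le_right _ _) le_rfl
          _ ≤ v := min_le_left _ _
          _ ≤ _ := this
      · have : v + t * (vp - v) ≤ vp := by nlinarith
        calc v + t * (vp - v) ≤ vp := this
          _ ≤ max (max vm v) vp := le_max_right _ _
    · constructor
      · have : vp ≤ v + t * (vp - v) := by nlinarith
        calc min (min vm v) vp ≤ vp := min_le_right _ _
          _ ≤ _ := this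
      · have : v + t * (vp - v) ≤ v := by nlinarith
        calc v + t * (vp - v) ≤ v := this
          _ ≤ max vm v := le_max_right _ _
          _ ≤ max (max vm v) vp := le_max_left _ _
end

section
/- Let v_{i-1}, v_i, v_{i+1} be real numbers with b = v_{i+1} - v_i ≠ 0 and r = (v_i - v_{i-1})/b. Define the weight ω = 1/3 + (2/3)·(1 - min(2|r|/(1+|r|), 3/2)). Then P(ω) = ω·(3v_i - v_{i-1})/2 + (1-ω)·(v_i + v_{i+1})/2 satisfies min(v_{i-1}, v_i, v_{i+1}) ≤ P(ω) ≤ max(v_{i-1}, v_i, v_{i+1}). -/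
/-!
Write `b = v_{i+1} - v_i`, so that `v_{i-1} = v_i - r b` and `P(ω) = v_i + c b` with
`c = (ω (r - 1) + 1) / 2`. Hence `P(ω)` lies between `v_i` and `v_{i+1}` as soon as `c ∈ [0, 1]`.
For `|r| ≥ 3` the weight vanishes and `c = 1/2`; for `|r| ≤ 3` the weight is
`(3 - |r|) / (3 (1 + |r|))`, and clearing denominators reduces `0 ≤ 2c ≤ 2` to the signs of
`r (7 - r)` and `r² - r + 6` when `r ≥ 0`, and of `r (r - 1)` and `(r + 6)(1 - r)` when `r < 0`.
-/

namespace WENO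

/-- The nonlinear weight `ω₀²` as a function of the smoothness ratio `r`. -/
noncomputable def nonlinearWeight (r : ℝ) : ℝ :=
  1/3 + (2/3) * (1 - min (2 * |r| / (1 + |r|)) (3/2))

lemma nonlinearWeight_of_abs_le {r : ℝ} (hr : |r| ≤ 3) :
    nonlinearWeight r = (3 - |r|) / (3 * (1 + |r|)) := by
  have hpos : 0 < 1 + |r| := by positivity
  have hmin : 2 * |r| / (1 + |r|) ≤ 3/2 := by
    rw [div_le_iff₀ hpos]; linarith
  rw [nonlinearWeight, min_eq_left hmin]
  field_simp
  ring

lemma nonlinearWeight_of_three_le_abs {r : ℝ} (hr : 3 ≤ |r|) : nonlinearWeight r = 0 := by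
  have hpos : 0 < 1 + |r| := by positivity
  have hmin : 3/2 ≤ 2 * |r| / (1 + |r|) := by
    rw [le_div_iff₀ hpos]; linarith
  rw [nonlinearWeight, min_eq_right hmin]
  norm_num

lemma nonlinearWeight_mul_sub_one_add_one_mem_Icc (r : ℝ) :
    nonlinearWeight r * (r - 1) + 1 ∈ Set.Icc 0 2 := by
  rcases le_total |r| 3 with hr | hr
  · have hpos : 0 < 3 * (1 + |r|) := by positivity
    have hexpand : nonlinearWeight r * (r - 1) + 1
        = ((3 - |r|) * (r - 1) + 3 * (1 + |r|)) / (3 * (1 + |r|)) := by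
      rw [nonlinearWeight_of_abs_le hr]
      field_simp
    rw [hexpand, Set.mem_Icc, le_div_iff₀ hpos, div_le_iff₀ hpos, zero_mul]
    rcases abs_cases r with ⟨habs, hr0⟩ | ⟨habs, hr0⟩
    · rw [habs] at hr ⊢
      constructor <;> nlinarith
    · rw [habs] at hr ⊢
      constructor <;> nlinarith
  · rw [nonlinearWeight_of_three_le_abs hr]
    norm_num

end WENO

open WENO in
theorem stmt_9 (vm v vp : ℝ) (hb : vp - v ≠ 0)
    (r : ℝ) (hr : r = (v - vm) / (vp - v))
    (ω : ℝ) (hω : ω = 1/3 + (2/3) * (1 - min (2 * |r| / (1 + |r|)) (3/2))) :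
    min (min vm v) vp ≤ ω * (3 * v - vm) / 2 + (1 - ω) * (v + vp) / 2 ∧
      ω * (3 * v - vm) / 2 + (1 - ω) * (v + vp) / 2 ≤ max (max vm v) vp := by
  have hvm : vm = v - r * (vp - v) := by rw [hr]; field_simp; ring
  have hP : ω * (3 * v - vm) / 2 + (1 - ω) * (v + vp) / 2
      = v + ((ω * (r - 1) + 1) / 2) • (vp - v) := by
    rw [hvm, smul_eq_mul]; ring
  obtain ⟨hc0, hc2⟩ : ω * (r - 1) + 1 ∈ Set.Icc 0 2 := by
    rw [hω]; exact nonlinearWeight_mul_sub_one_add_one_mem_Icc r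
  rw [hP, ← Set.mem_Icc]
  refine (convex_Icc _ _).add_smul_sub_mem ?_ ?_ ⟨by linarith, by linarith⟩
  · exact ⟨min_le_of_left_le (min_le_right _ _), le_max_of_le_left (le_max_right _ _)⟩
  · exact ⟨min_le_right _ _, le_max_right _ _⟩
end

section
/- Let k be a real number with 3/2 ≤ k ≤ 2. Let v_{i-1}, v_i, v_{i+1} be real numbers with b = v_{i+1} - v_i ≠ 0 and r = (v_i - v_{i-1})/b. Define the weight ω = 1/3 + (2/3)·(1 - min(k|r|, max(1, 3|r|/(2|r|+k)))). Then P(ω) = ω·(3v_i - v_{i-1})/2 + (1-ω)·(v_i + v_{i+1})/2 satisfies min(v_{i-1}, v_i, v_{i+1}) ≤ P(ω) ≤ max(v_{i-1}, v_i, v_{i+1}). -/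
/-! The interpolant is `P(ω) = (v_i + v_{i+1})/2 + ω (r - 1) b / 2`, so it lies between `v_i` and
`v_{i+1}` as soon as `ω |r - 1| ≤ 1`. Since `ω = 1 - 2m/3` for the limiter value `m ∈ [0, 3/2]`,
it suffices that `ω (1 + |r|) ≤ 1`, i.e. `3|r| ≤ 2m (1 + |r|)`. For the branch `k|r|` of the
limiter this is `k ≥ 3/2`, for the branch `3|r|/(2|r| + k)` it is `k ≤ 2`. -/

open Set

/-- `ω₀,₅ᵏ = 1 - (2/3) · limiter k |r|`. -/
noncomputable def limiter (k s : ℝ) : ℝ := min (k * s) (max 1 (3 * s / (2 * s + k)))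

section limiter

variable {k s : ℝ}

lemma limiter_le_three_halves (hk : 0 < k) (hs : 0 ≤ s) : limiter k s ≤ 3 / 2 := by
  have hX : 3 * s / (2 * s + k) ≤ 3 / 2 := by
    rw [div_le_iff₀ (by positivity)]
    linarith
  exact (min_le_right _ _).trans (max_le (by norm_num) hX)

lemma three_mul_le_two_mul_limiter_mul (hk1 : 3 / 2 ≤ k) (hk2 : k ≤ 2) (hs : 0 ≤ s) :
    3 * s ≤ 2 * limiter k s * (1 + s) := by
  have hden : 0 < 2 * s + k := by linarith
  set X := 3 * s / (2 * s + k) with hXdef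
  have hXmul : X * (2 * s + k) = 3 * s := div_mul_cancel₀ _ hden.ne'
  have hX : 3 * s ≤ 2 * max 1 X * (1 + s) :=
    calc 3 * s = X * (2 * s + k) := hXmul.symm
      _ ≤ X * (2 * (1 + s)) := by gcongr; linarith
      _ ≤ 2 * max 1 X * (1 + s) := by nlinarith [le_max_right 1 X]
  rcases min_cases (k * s) (max 1 X) with ⟨hmin, -⟩ | ⟨hmin, -⟩ <;>
    simp only [limiter, ← hXdef, hmin]
  · nlinarith [mul_nonneg hs (by nlinarith : (0 : ℝ) ≤ 2 * k * (1 + s) - 3)]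
  · exact hX

end limiter

lemma weighted_interp_mem_uIcc {ω r vm v vp : ℝ} (hω0 : 0 ≤ ω) (hω1 : ω * (1 + |r|) ≤ 1)
    (hr : v - vm = r * (vp - v)) :
    ω * (3 * v - vm) / 2 + (1 - ω) * (v + vp) / 2 ∈ uIcc v vp := by
  have hdev : |ω * (r - 1)| ≤ 1 :=
    calc |ω * (r - 1)| = ω * |r - 1| := by rw [abs_mul, abs_of_nonneg hω0]
      _ ≤ ω * (1 + |r|) := by gcongr; simpa [add_comm] using abs_sub r 1
      _ ≤ 1 := hω1
  obtain ⟨hlo, hhi⟩ := abs_le.mp hdev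
  rw [← segment_eq_uIcc]
  refine ⟨(1 - ω * (r - 1)) / 2, (1 + ω * (r - 1)) / 2, by linarith, by linarith, by ring, ?_⟩
  simp only [smul_eq_mul]
  linear_combination (-ω / 2) * hr

theorem stmt_10 (k : ℝ) (hk1 : 3/2 ≤ k) (hk2 : k ≤ 2)
    (vm v vp : ℝ) (hb : vp - v ≠ 0)
    (r : ℝ) (hr : r = (v - vm) / (vp - v))
    (ω : ℝ)
    (hω : ω = 1/3 + (2/3) * (1 - min (k * |r|) (max 1 (3 * |r| / (2 * |r| + k))))) :
    min (min vm v) vp ≤ ω * (3 * v - vm) / 2 + (1 - ω) * (v + vp) / 2 ∧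
      ω * (3 * v - vm) / 2 + (1 - ω) * (v + vp) / 2 ≤ max (max vm v) vp := by
  have hω' : ω = 1 - 2 / 3 * limiter k |r| := by rw [hω, limiter]; ring
  have hs := abs_nonneg r
  have hω0 : 0 ≤ ω := by
    linarith [limiter_le_three_halves (by linarith : 0 < k) hs]
  have hω1 : ω * (1 + |r|) ≤ 1 := by
    rw [hω']
    linarith [three_mul_le_two_mul_limiter_mul hk1 hk2 hs]
  have hvm : v - vm = r * (vp - v) := by rw [hr, div_mul_cancel₀ _ hb]
  obtain ⟨hlo, hhi⟩ := weighted_interp_mem_uIcc hω0 hω1 hvm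
  exact ⟨(min_le_min_right _ (min_le_right _ _)).trans hlo,
    hhi.trans (max_le_max_right _ (le_max_right _ _))⟩
end

section
/- Let v : ℝ → ℝ be three times continuously differentiable on an interval [c, d], with |v'''(x)| ≤ B for all x in [c, d]. Then for every x_i and h > 0 with [x_i - h, x_i + h] ⊆ [c, d], the approximation v̂ = (1/4)·(3v(x_i) - v(x_i - h))/2 + (3/4)·(v(x_i) + v(x_i + h))/2 satisfies |v̂ - v(x_i + h/2)| ≤ C·B·h³, where C is an absolute constant (e.g. C = 1 works). -/
open Set

lemma itdw_subset {f : ℝ → ℝ} {s t : Set ℝ} {n : ℕ} (hf : ContDiffOn ℝ n f t) (hst : s ⊆ t)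
    (hs : UniqueDiffOn ℝ s) (ht : UniqueDiffOn ℝ t) {m : ℕ} (hmn : m ≤ n) {x : ℝ} (hx : x ∈ s) :
    iteratedDerivWithin m f s x = iteratedDerivWithin m f t x := by
  have h0 := hf.ftaylorSeriesWithin ht
  have h2 := (h0.mono hst).eq_iteratedFDerivWithin_of_uniqueDiffOn (by exact_mod_cast hmn) hs hx
  have h3 := h0.eq_iteratedFDerivWithin_of_uniqueDiffOn (by exact_mod_cast hmn) ht (hst hx)
  simp only [iteratedDerivWithin_eq_iteratedFDerivWithin, ← h2, h3]

lemma reflect_itdw (f : ℝ → ℝ) {a b : ℝ} (hab : a < b) {n : ℕ}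
    (hf : ContDiffOn ℝ (n+1) f (Set.Icc a b)) :
    ∀ k ≤ n+1, ∀ x ∈ Set.Icc a b,
      iteratedDerivWithin k (fun t => f (a+b-t)) (Set.Icc a b) x
        = (-1:ℝ)^k * iteratedDerivWithin k f (Set.Icc a b) (a+b-x) := by
  have hu : UniqueDiffOn ℝ (Set.Icc a b) := uniqueDiffOn_Icc hab
  intro k
  induction k with
  | zero => intro _ x hx; simp
  | succ k IH =>
    intro hk x hx
    have hk' : k ≤ n + 1 := Nat.le_of_succ_le hk
    have hx' : a + b - x ∈ Set.Icc a b := by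
      constructor <;> [linarith [hx.2]; linarith [hx.1]]
    have hFd : DifferentiableWithinAt ℝ (iteratedDerivWithin k f (Set.Icc a b))
        (Set.Icc a b) (a+b-x) := by
      refine (hf.differentiableOn_iteratedDerivWithin ?_ hu) _ hx'
      exact_mod_cast Nat.lt_succ_of_le (Nat.lt_succ_iff.mp hk)
    have h1 : HasDerivWithinAt (fun y : ℝ => a+b-y) (-1) (Set.Icc a b) x := by
      simpa using (hasDerivWithinAt_id x (Set.Icc a b)).const_sub (a+b)
    have maps : Set.MapsTo (fun y : ℝ => a+b-y) (Set.Icc a b) (Set.Icc a b) := by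
      intro y hy; simp only [Set.mem_Icc] at hy ⊢; constructor <;> linarith
    have h3 : HasDerivWithinAt
        (fun y => iteratedDerivWithin k f (Set.Icc a b) (a+b-y))
        (derivWithin (iteratedDerivWithin k f (Set.Icc a b)) (Set.Icc a b) (a+b-x) * (-1))
        (Set.Icc a b) x :=
      HasDerivWithinAt.comp x hFd.hasDerivWithinAt h1 maps
    have h4 := (h3.const_mul ((-1:ℝ)^k)).derivWithin (hu x hx)
    rw [iteratedDerivWithin_succ,
      derivWithin_congr (fun y hy => IH hk' y hy) (IH hk' x hx), h4,
      iteratedDerivWithin_succ]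
    ring

lemma taylor_left {f : ℝ → ℝ} {a b C x : ℝ} {n : ℕ} (hab : a < b)
    (hf : ContDiffOn ℝ (n+1) f (Set.Icc a b)) (hx : x ∈ Set.Icc a b)
    (hC : ∀ y ∈ Set.Icc a b, |iteratedDerivWithin (n+1) f (Set.Icc a b) y| ≤ C) :
    |f x - taylorWithinEval f n (Set.Icc a b) b x| ≤ C * (b - x) ^ (n + 1) / (n.factorial : ℝ) := by
  set g : ℝ → ℝ := fun t => f (a+b-t) with hg
  have maps : Set.MapsTo (fun y : ℝ => a+b-y) (Set.Icc a b) (Set.Icc a b) := by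
    intro y hy; simp only [Set.mem_Icc] at hy ⊢; constructor <;> linarith
  have hgC : ContDiffOn ℝ (n+1) g (Set.Icc a b) :=
    hf.comp ((contDiff_const.sub contDiff_id).contDiffOn) maps
  have hx' : a + b - x ∈ Set.Icc a b := by
    constructor <;> [linarith [hx.2]; linarith [hx.1]]
  have hrefl := reflect_itdw f hab hf
  have hbd : ∀ y ∈ Set.Icc a b,
      ‖iteratedDerivWithin (n+1) g (Set.Icc a b) y‖ ≤ C := by
    intro y hy
    rw [Real.norm_eq_abs, hrefl (n+1) le_rfl y hy, abs_mul, abs_pow, abs_neg, abs_one, one_pow,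
      one_mul]
    exact hC _ (maps hy)
  have key := taylor_mean_remainder_bound hab.le hgC hx' hbd
  have hgx : g (a+b-x) = f x := by simp [hg]
  have htay : taylorWithinEval g n (Set.Icc a b) a (a+b-x)
      = taylorWithinEval f n (Set.Icc a b) b x := by
    rw [taylor_within_apply, taylor_within_apply]
    refine Finset.sum_congr rfl fun k hk => ?_
    have hkn : k ≤ n + 1 := by
      have := Finset.mem_range.mp hk; omega
    rw [hrefl k hkn a (Set.left_mem_Icc.mpr hab.le), show a+b-a = b by ring,
      smul_eq_mul, smul_eq_mul]
    have hpow : (a+b-x-a)^k * (-1:ℝ)^k = (x-b)^k := by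
      rw [← mul_pow, show (a+b-x-a)*(-1:ℝ) = x-b by ring]
    rw [← hpow]; ring
  rw [hgx, htay] at key
  rw [show a + b - x - a = b - x by ring, Real.norm_eq_abs] at key
  exact key

lemma texp {v : ℝ → ℝ} {c d : ℝ} (hv3 : ContDiffOn ℝ (3:ℕ) v (Set.Icc c d))
    {p q : ℝ} (hpq : p < q) (hsub : Set.Icc p q ⊆ Set.Icc c d) (hcd : c < d)
    {xi : ℝ} (hxi : xi ∈ Set.Icc p q) (y : ℝ) :
    taylorWithinEval v 2 (Set.Icc p q) xi y =
      v xi + (y - xi) * iteratedDerivWithin 1 v (Set.Icc c d) xi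
        + (y - xi)^2/2 * iteratedDerivWithin 2 v (Set.Icc c d) xi := by
  rw [taylor_within_apply]
  have e0 := itdw_subset (n:=3) hv3 hsub (uniqueDiffOn_Icc hpq) (uniqueDiffOn_Icc hcd)
    (m:=0) (by norm_num) hxi
  have e1 := itdw_subset (n:=3) hv3 hsub (uniqueDiffOn_Icc hpq) (uniqueDiffOn_Icc hcd)
    (m:=1) (by norm_num) hxi
  have e2 := itdw_subset (n:=3) hv3 hsub (uniqueDiffOn_Icc hpq) (uniqueDiffOn_Icc hcd)
    (m:=2) (by norm_num) hxi
  simp only [Finset.sum_range_succ, Finset.sum_range_zero, e0, e1, e2,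
    iteratedDerivWithin_zero, smul_eq_mul, Nat.factorial]
  push_cast
  ring

theorem stmt_12 (v : ℝ → ℝ) (c d B : ℝ)
    (hv : ContDiffOn ℝ 3 v (Set.Icc c d))
    (hB : ∀ x ∈ Set.Icc c d, |iteratedDerivWithin 3 v (Set.Icc c d) x| ≤ B)
    (xi h : ℝ) (hh : 0 < h) (hsub : Set.Icc (xi - h) (xi + h) ⊆ Set.Icc c d) :
    |(1/4) * (3 * v xi - v (xi - h)) / 2 + (3/4) * (v xi + v (xi + h)) / 2
        - v (xi + h/2)| ≤ 1 * B * h ^ 3 := by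
  have hv3 : ContDiffOn ℝ (3:ℕ) v (Set.Icc c d) := by exact_mod_cast hv
  have hmemA : xi - h ∈ Set.Icc c d := hsub (by constructor <;> linarith)
  have hmemB : xi + h ∈ Set.Icc c d := hsub (by constructor <;> linarith)
  have hcd : c < d := by
    rcases hmemA with ⟨h1, _⟩; rcases hmemB with ⟨_, h2⟩; linarith
  have h1ab : xi - h < xi := by linarith
  have h2ab : xi < xi + h := by linarith
  have hI1 : Set.Icc (xi-h) xi ⊆ Set.Icc c d :=
    (Set.Icc_subset_Icc le_rfl (by linarith)).trans hsub
  have hI2 : Set.Icc xi (xi+h) ⊆ Set.Icc c d :=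
    (Set.Icc_subset_Icc (by linarith) le_rfl).trans hsub
  have hv1 : ContDiffOn ℝ ((2:ℕ)+1) v (Set.Icc (xi-h) xi) := hv3.mono hI1
  have hv2 : ContDiffOn ℝ ((2:ℕ)+1) v (Set.Icc xi (xi+h)) := hv3.mono hI2
  have hC1 : ∀ y ∈ Set.Icc (xi-h) xi,
      |iteratedDerivWithin 3 v (Set.Icc (xi-h) xi) y| ≤ B := by
    intro y hy
    rw [itdw_subset (n:=3) hv3 hI1 (uniqueDiffOn_Icc h1ab) (uniqueDiffOn_Icc hcd) le_rfl hy]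
    exact hB _ (hI1 hy)
  have hC2 : ∀ y ∈ Set.Icc xi (xi+h),
      ‖iteratedDerivWithin 3 v (Set.Icc xi (xi+h)) y‖ ≤ B := by
    intro y hy
    rw [Real.norm_eq_abs,
      itdw_subset (n:=3) hv3 hI2 (uniqueDiffOn_Icc h2ab) (uniqueDiffOn_Icc hcd) le_rfl hy]
    exact hB _ (hI2 hy)
  have t1 := taylor_left (n:=2) h1ab hv1 (Set.left_mem_Icc.mpr h1ab.le) hC1
  have t2 := taylor_mean_remainder_bound (n:=2) h2ab.le hv2
    (Set.right_mem_Icc.mpr h2ab.le) hC2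
  have hmid : xi + h/2 ∈ Set.Icc xi (xi+h) := by constructor <;> linarith
  have t3 := taylor_mean_remainder_bound (n:=2) h2ab.le hv2 hmid hC2
  rw [Real.norm_eq_abs] at t2 t3
  have hxi1 : xi ∈ Set.Icc (xi-h) xi := Set.right_mem_Icc.mpr h1ab.le
  have hxi2 : xi ∈ Set.Icc xi (xi+h) := Set.left_mem_Icc.mpr h2ab.le
  have key : (1/4) * (3 * v xi - v (xi - h)) / 2 + (3/4) * (v xi + v (xi + h)) / 2
        - v (xi + h/2)
      = (-(1/8))*(v (xi-h) - taylorWithinEval v 2 (Set.Icc (xi-h) xi) xi (xi-h))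
        + (3/8)*(v (xi+h) - taylorWithinEval v 2 (Set.Icc xi (xi+h)) xi (xi+h))
        + (-1)*(v (xi+h/2) - taylorWithinEval v 2 (Set.Icc xi (xi+h)) xi (xi+h/2)) := by
    rw [texp hv3 h1ab hI1 hcd hxi1, texp hv3 h2ab hI2 hcd hxi2, texp hv3 h2ab hI2 hcd hxi2]
    ring
  have hBpos : 0 ≤ B := le_trans (abs_nonneg _) (hB xi (hI2 hxi2))
  rw [key]
  set X := v (xi-h) - taylorWithinEval v 2 (Set.Icc (xi-h) xi) xi (xi-h) with hX
  set Y := v (xi+h) - taylorWithinEval v 2 (Set.Icc xi (xi+h)) xi (xi+h) with hY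
  set Z := v (xi+h/2) - taylorWithinEval v 2 (Set.Icc xi (xi+h)) xi (xi+h/2) with hZ
  have tri := abs_add_three ((-(1/8))*X) ((3/8)*Y) ((-1)*Z)
  rw [abs_mul, abs_mul, abs_mul] at tri
  have e1 : xi - (xi - h) = h := by ring
  have e2 : xi + h - xi = h := by ring
  have e3 : xi + h/2 - xi = h/2 := by ring
  rw [e1] at t1; rw [e2] at t2; rw [e3] at t3
  have hfac : ((2:ℕ).factorial : ℝ) = 2 := by norm_num [Nat.factorial]
  rw [hfac] at t1 t2 t3
  refine tri.trans ?_
  have hn : |(-(1/8):ℝ)| = 1/8 := by norm_num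
  have hn2 : |(3/8:ℝ)| = 3/8 := by norm_num
  have hn3 : |(-1:ℝ)| = 1 := by norm_num
  rw [hn, hn2, hn3]
  nlinarith [pow_pos hh 3, t1, t2, t3, abs_nonneg X, abs_nonneg Y, abs_nonneg Z]
end

section
/- Let v_{i-1}, v_i, v_{i+1} be real numbers with a = v_i - v_{i-1} ≤ 0 and b = v_{i+1} - v_i < 0 (monotonically decreasing data). For β ∈ ℝ define P(β) = β·(3v_i - v_{i-1})/2 + (1-β)·(v_i + v_{i+1})/2. If 2a + b ≤ β·(b - a) ≤ -b, then v_{i+1} ≤ P(β) ≤ v_{i-1}. -/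
theorem weighted_interface_value_eq (vm v vp β : ℝ) :
    β * (3 * v - vm) / 2 + (1 - β) * (v + vp) / 2 =
      v + ((vp - v) - β * ((vp - v) - (v - vm))) / 2 := by
  ring

theorem stmt_15_general (vm v vp β : ℝ)
    (h1 : 2 * (v - vm) + (vp - v) ≤ β * ((vp - v) - (v - vm)))
    (h2 : β * ((vp - v) - (v - vm)) ≤ -(vp - v)) :
    vp ≤ β * (3 * v - vm) / 2 + (1 - β) * (v + vp) / 2 ∧
      β * (3 * v - vm) / 2 + (1 - β) * (v + vp) / 2 ≤ vm := by
  -- With `β * (b - a)` as an atom, the lower bound is `h2` and the upper bound is `h1`.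
  rw [weighted_interface_value_eq]
  constructor <;> linarith

theorem stmt_15 (vm v vp β : ℝ)
    (ha : v - vm ≤ 0) (hb : vp - v < 0)
    (h1 : 2 * (v - vm) + (vp - v) ≤ β * ((vp - v) - (v - vm)))
    (h2 : β * ((vp - v) - (v - vm)) ≤ -(vp - v)) :
    vp ≤ β * (3 * v - vm) / 2 + (1 - β) * (v + vp) / 2 ∧
      β * (3 * v - vm) / 2 + (1 - β) * (v + vp) / 2 ≤ vm :=
  stmt_15_general vm v vp β h1 h2
end

section
/- Let v_{i-1}, v_i, v_{i+1} be real numbers with b = v_{i+1} - v_i ≠ 0 and r = (v_i - v_{i-1})/b with r ≠ 1. Define sgn(r) = 1 if r > 0 and -1 if r ≤ 0, K = min(1, sgn(r)/(r-1)), and for η ∈ [0,1] the weight β₀^η = η·K. If K ≥ 0, then P(β₀^η) = β₀^η·(3v_i - v_{i-1})/2 + (1-β₀^η)·(v_i + v_{i+1})/2 satisfies min(v_{i-1}, v_i, v_{i+1}) ≤ P(β₀^η) ≤ max(v_{i-1}, v_i, v_{i+1}). -/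
/-! With `b = v_{i+1} - v_i` and `v_i - v_{i-1} = r b`, the interface value is
`P = v_i + (1 + β (r - 1)) / 2 · b`, a point of the segment `[v_i, v_{i+1}]` exactly when
`|β (r - 1)| ≤ 1`. The bound `β ≤ K ≤ sgn(r) / (r - 1)` gives this for `r ≤ 0` and `r > 1`;
for `0 < r < 1` the bound is negative, which `β ≥ 0` excludes, and for `r = 1` there is
nothing to prove. -/

open Set

lemma abs_mul_sub_one_le_one_of_le_sign_div {β r : ℝ} (hβ0 : 0 ≤ β)
    (hβ : β ≤ (if r > 0 then (1 : ℝ) else -1) / (r - 1)) : |β * (r - 1)| ≤ 1 := by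
  rcases lt_trichotomy r 1 with hr1 | rfl | hr1
  · split_ifs at hβ with hr0
    · have : (1 : ℝ) / (r - 1) < 0 := div_neg_of_pos_of_neg one_pos (by linarith)
      linarith
    · rw [← neg_div_neg_eq, neg_neg, neg_sub, le_div_iff₀ (by linarith)] at hβ
      rw [← abs_neg, ← mul_neg, neg_sub, abs_of_nonneg (mul_nonneg hβ0 (by linarith))]
      exact hβ
  · simp
  · rw [if_pos (by linarith), le_div_iff₀ (by linarith)] at hβ
    rw [abs_of_nonneg (mul_nonneg hβ0 (by linarith))]
    exact hβ

lemma add_mul_sub_mem_uIcc (a b : ℝ) {s : ℝ} (hs0 : 0 ≤ s) (hs1 : s ≤ 1) :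
    a + s * (b - a) ∈ uIcc a b := by
  rw [← segment_eq_uIcc]
  simpa [AffineMap.lineMap_apply_ring', add_comm] using lineMap_mem_segment ℝ a b ⟨hs0, hs1⟩

lemma interface_value_eq {vm v vp β r : ℝ} (hvm : v - vm = r * (vp - v)) :
    β * (3 * v - vm) / 2 + (1 - β) * (v + vp) / 2 = v + (1 + β * (r - 1)) / 2 * (vp - v) := by
  linear_combination β / 2 * hvm

theorem stmt_18_general (vm v vp : ℝ) (hb : vp - v ≠ 0)
    (r : ℝ) (hr : r = (v - vm) / (vp - v))
    (K : ℝ) (hK : K = min 1 ((if r > 0 then (1:ℝ) else -1) / (r - 1)))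
    (η : ℝ) (hη0 : 0 ≤ η) (hη1 : η ≤ 1) (hKpos : 0 ≤ K)
    (β : ℝ) (hβ : β = η * K) :
    min (min vm v) vp ≤ β * (3 * v - vm) / 2 + (1 - β) * (v + vp) / 2 ∧
      β * (3 * v - vm) / 2 + (1 - β) * (v + vp) / 2 ≤ max (max vm v) vp := by
  have hvm : v - vm = r * (vp - v) := by rw [hr, div_mul_cancel₀ _ hb]
  have hβK : β ≤ (if r > 0 then (1 : ℝ) else -1) / (r - 1) :=
    hβ ▸ (mul_le_of_le_one_left hKpos hη1).trans (hK ▸ min_le_right _ _)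
  obtain ⟨hlow, hhigh⟩ :=
    abs_le.mp (abs_mul_sub_one_le_one_of_le_sign_div (hβ ▸ mul_nonneg hη0 hKpos) hβK)
  obtain ⟨hmin, hmax⟩ := add_mul_sub_mem_uIcc v vp
    (s := (1 + β * (r - 1)) / 2) (by linarith) (by linarith)
  rw [interface_value_eq hvm]
  exact ⟨(min_le_min_right vp (min_le_right vm v)).trans hmin,
    hmax.trans (max_le_max_right vp (le_max_right vm v))⟩

theorem stmt_18 (vm v vp : ℝ) (hb : vp - v ≠ 0)
    (r : ℝ) (hr : r = (v - vm) / (vp - v)) (hr1 : r ≠ 1)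
    (K : ℝ) (hK : K = min 1 ((if r > 0 then (1:ℝ) else -1) / (r - 1)))
    (η : ℝ) (hη0 : 0 ≤ η) (hη1 : η ≤ 1) (hKpos : 0 ≤ K)
    (β : ℝ) (hβ : β = η * K) :
    min (min vm v) vp ≤ β * (3 * v - vm) / 2 + (1 - β) * (v + vp) / 2 ∧
      β * (3 * v - vm) / 2 + (1 - β) * (v + vp) / 2 ≤ max (max vm v) vp :=
  stmt_18_general vm v vp hb r hr K hK η hη0 hη1 hKpos β hβ
end

section
/- Let v_{i-1}, v_i, v_{i+1} be real numbers with b = v_{i+1} - v_i ≠ 0 and r = (v_i - v_{i-1})/b. Define the piecewise weight β = 1/4 if -3 ≤ r ≤ 5, β = 8/(3r² + 5) if r < -3, and β = 5/(3r² - 55) if r > 5. Then for all r with r < -3 or r > 5 we have 0 ≤ β ≤ min(1, sgn(r)/(r-1)), where sgn(r) = 1 if r > 0 and -1 if r ≤ 0; consequently P(β) = β·(3v_i - v_{i-1})/2 + (1-β)·(v_i + v_{i+1})/2 satisfies min(v_{i-1}, v_i, v_{i+1}) ≤ P(β) ≤ max(v_{i-1}, v_i, v_{i+1}) whenever r < -3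 or r > 5. -/
lemma stmt_19_aux (vm v vp r β : ℝ) (ha : v - vm = r * (vp - v))
    (hs1 : 0 ≤ 1 - β + β * r) (hs2 : β * (r - 1) ≤ 1) :
    min (min vm v) vp ≤ β * (3 * v - vm) / 2 + (1 - β) * (v + vp) / 2 ∧
      β * (3 * v - vm) / 2 + (1 - β) * (v + vp) / 2 ≤ max (max vm v) vp := by
  have hmin : min (min vm v) vp ≤ min v vp :=
    min_le_min (min_le_right _ _) le_rfl
  have hmax : max v vp ≤ max (max vm v) vp :=
    max_le_max (le_max_right _ _) le_rfl
  have hP : β * (3 * v - vm) / 2 + (1 - β) * (v + vp) / 2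
      = v + (vp - v) / 2 * (1 - β + β * r) := by
    linear_combination (β / 2) * ha
  rw [hP]
  rcases le_or_gt (vp - v) 0 with hbn | hbp
  · constructor
    · refine hmin.trans ?_
      have h1 : min v vp = vp := min_eq_right (by linarith)
      rw [h1]
      nlinarith [mul_nonneg (neg_nonneg.mpr hbn) (sub_nonneg.mpr hs2)]
    · refine le_trans ?_ hmax
      have h1 : max v vp = v := max_eq_left (by linarith)
      rw [h1]
      nlinarith [mul_nonneg (neg_nonneg.mpr hbn) hs1]
  · constructor
    · refine hmin.trans ?_
      have h1 : min v vp = v := min_eq_left (by linarith)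
      rw [h1]
      nlinarith [mul_nonneg hbp.le hs1]
    · refine le_trans ?_ hmax
      have h1 : max v vp = vp := max_eq_right (by linarith)
      rw [h1]
      nlinarith [mul_nonneg hbp.le (sub_nonneg.mpr hs2)]

theorem stmt_19 (vm v vp : ℝ) (hb : vp - v ≠ 0)
    (r : ℝ) (hr : r = (v - vm) / (vp - v))
    (hout : r < -3 ∨ 5 < r)
    (β : ℝ)
    (hβ : β = if -3 ≤ r ∧ r ≤ 5 then (1/4 : ℝ)
        else if r < -3 then 8 / (3 * r ^ 2 + 5) else 5 / (3 * r ^ 2 - 55)) :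
    (0 ≤ β ∧ β ≤ min 1 ((if r > 0 then (1:ℝ) else -1) / (r - 1))) ∧
      min (min vm v) vp ≤ β * (3 * v - vm) / 2 + (1 - β) * (v + vp) / 2 ∧
        β * (3 * v - vm) / 2 + (1 - β) * (v + vp) / 2 ≤ max (max vm v) vp := by
  have ha : v - vm = r * (vp - v) := by
    rw [hr]; field_simp
  rcases hout with h | h
  · have hβv : β = 8 / (3 * r ^ 2 + 5) := by
      rw [hβ, if_neg (by push_neg; intro h3; linarith), if_pos h]
    have hd : (0:ℝ) < 3 * r ^ 2 + 5 := by positivity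
    have hβ0 : 0 ≤ β := by rw [hβv]; positivity
    have hβle : β ≤ 1 / (1 - r) := by
      rw [hβv, div_le_div_iff₀ hd (by linarith)]
      nlinarith
    have hβ1 : β * (1 - r) ≤ 1 := by
      have := (le_div_iff₀ (by linarith : (0:ℝ) < 1 - r)).mp hβle
      linarith
    have hs1 : 0 ≤ 1 - β + β * r := by nlinarith
    have hs2 : β * (r - 1) ≤ 1 := by nlinarith
    have hsgn : (if r > 0 then (1:ℝ) else -1) = -1 := by
      rw [if_neg (by linarith)]
    refine ⟨⟨hβ0, ?_⟩, stmt_19_aux vm v vp r β ha hs1 hs2⟩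
    rw [hsgn]
    have heq : (-1:ℝ) / (r - 1) = 1 / (1 - r) := by
      rw [div_eq_div_iff (by linarith) (by linarith)]; ring
    rw [heq]
    refine le_min (hβle.trans ?_) hβle
    rw [div_le_one (by linarith)]; linarith
  · have hβv : β = 5 / (3 * r ^ 2 - 55) := by
      rw [hβ, if_neg (by push_neg; intro h3; linarith), if_neg (by linarith)]
    have hd : (0:ℝ) < 3 * r ^ 2 - 55 := by nlinarith
    have hβ0 : 0 ≤ β := by rw [hβv]; positivity
    have hβle : β ≤ 1 / (r - 1) := by
      rw [hβv, div_le_div_iff₀ hd (by linarith)]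
      nlinarith
    have hs2 : β * (r - 1) ≤ 1 := by
      have := (le_div_iff₀ (by linarith : (0:ℝ) < r - 1)).mp hβle
      linarith
    have hs1 : 0 ≤ 1 - β + β * r := by nlinarith
    have hsgn : (if r > 0 then (1:ℝ) else -1) = 1 := by
      rw [if_pos (by linarith)]
    refine ⟨⟨hβ0, ?_⟩, stmt_19_aux vm v vp r β ha hs1 hs2⟩
    rw [hsgn]
    refine le_min (hβle.trans ?_) hβle
    rw [div_le_one (by linarith)]; linarith
end
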